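/- arXiv:2102.07953 — 4 statements merged into one kernel-verified Lean document; each statement's English description precedes it below -/
import Mathlib

section
/- Suppose that: (a) for every dual vector λ and every node i, the minimizer x*_{λ,i} of l_i(·, λ) over 𝒳_i exists and there is a subgradient g_i ∈ ∂F_i(x*_{λ,i}) such that g_i + Σ_{j : (i,j)∈Ē} E_{ij}ᵀ λ_{ij} − Σ_{j : (j,i)∈Ē} E_{ij}ᵀ λ_{ji} = 0; (b) the constraints E_{ij} x_i = E_{ji} x_j, (i,j) ∈ E, are linearly independent, i.e. the stacked constraint matrix H (so that the constraints read H x = 0) has full row rank; and (c) for every (i,j) ∈ Ē there exist ε > 0 and a nonempty set M_{ij} with M_{ij} + εB ⊆ X̄_{ij} ∩ X̄_{ji}, where X̄_{ij} := {E_{ij} y : y ∈ 𝒳_i}, X̄_{ji} := {E_{ji} y : y ∈ 𝒳_j}, and B is the closed unit ball of the appropriate dimension. Then the dual function Q is radially unbounded: Q(λ) → −∞ as |λ| → ∞. (Lemma 1) -/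
/-! Summing the subgradient inequalities and using stationarity `g = -Hᵀλ` shows that `x*_λ`
minimizes the full Lagrangian `Σ_i F_i(y_i) + ⟪λ, H y⟫` over all `y`, not only over `𝒳`. As `H`
is onto, it has a linear right inverse `T`; testing with `y = T(-λ/‖λ‖)` gives
`Q(λ) ≤ C - ‖λ‖`, where `C` bounds the continuous convex cost `Σ_i F_i((T u)_i)` on the unit
sphere `‖u‖ = 1`. -/

open Filter Set
open scoped RealInnerProductSpace Pointwise

/-- The per-node Lagrangian
`l_i(x_i, λ) = F_i(x_i) + Σ_{e : s(e)=i} ⟪λ_e, A_e x⟫ − Σ_{e : t(e)=i} ⟪λ_e, B_e x⟫`,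
where `A_e x = E_{ij} x_i` and `B_e x = E_{ji} x_j` are the selection maps of edge `e = (i,j)`
viewed as maps of the full variable `x`. -/
noncomputable def nodeLagrangian {N : ℕ} {ι : Type*} [Fintype ι]
    (ndim : Fin N → ℕ) (edim : ι → ℕ) (s t : ι → Fin N)
    (Fc : ∀ i : Fin N, EuclideanSpace ℝ (Fin (ndim i)) → ℝ)
    (A B : ∀ e : ι,
      (PiLp 2 fun i : Fin N => EuclideanSpace ℝ (Fin (ndim i))) →L[ℝ]
        EuclideanSpace ℝ (Fin (edim e)))
    (i : Fin N)
    (lam : PiLp 2 fun e : ι => EuclideanSpace ℝ (Fin (edim e)))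
    (x : PiLp 2 fun i : Fin N => EuclideanSpace ℝ (Fin (ndim i))) : ℝ :=
  Fc i (x i) + ∑ e ∈ Finset.univ.filter (fun e => s e = i), ⟪lam e, A e x⟫
    - ∑ e ∈ Finset.univ.filter (fun e => t e = i), ⟪lam e, B e x⟫

section
variable {E F : Type*} [NormedAddCommGroup E] [NormedSpace ℝ E]
  [NormedAddCommGroup F] [InnerProductSpace ℝ F] [FiniteDimensional ℝ F]

theorem tendsto_cobounded_atBot_of_le_add_inner {Q : F → ℝ} {f : E → ℝ} (hf : Continuous f)
    {H : E →ₗ[ℝ] F} (hH : Function.Surjective H) (hQ : ∀ lam y, Q lam ≤ f y + ⟪lam, H y⟫) :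
    Tendsto Q (Bornology.cobounded F) atBot := by
  obtain ⟨T, hT⟩ := H.exists_rightInverse_of_surjective (LinearMap.range_eq_top.mpr hH)
  have hHT (w : F) : H (T w) = w := LinearMap.congr_fun hT w
  obtain ⟨C, hC⟩ : BddAbove ((fun u => f (T (-u))) '' Metric.sphere (0 : F) 1) :=
    (isCompact_sphere 0 1).bddAbove_image
      (hf.comp (T.continuous_of_finiteDimensional.comp continuous_neg)).continuousOn
  have hQC : ∀ lam ≠ (0 : F), Q lam ≤ C - ‖lam‖ := by
    intro lam hlam
    have hnorm : ‖lam‖ ≠ 0 := norm_ne_zero_iff.mpr hlam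
    set u := ‖lam‖⁻¹ • lam
    have hu : u ∈ Metric.sphere (0 : F) 1 := by
      simp [u, norm_smul, hnorm]
    have hinner : ⟪lam, H (T (-u))⟫ = -‖lam‖ := by
      rw [hHT, inner_neg_right, real_inner_smul_right, real_inner_self_eq_norm_sq]
      field_simp
    linarith [hQ lam (T (-u)), hC ⟨u, hu, rfl⟩]
  refine tendsto_atBot_mono' _ ?_
    (tendsto_atBot_add_const_left _ C (tendsto_neg_atBot_iff.mpr tendsto_norm_cobounded_atTop))
  filter_upwards [tendsto_norm_cobounded_atTop.eventually_gt_atTop 0] with lam hlam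
  exact hQC lam (norm_pos_iff.mp hlam)

end

section

variable {N : ℕ} {ι : Type*} {ndim : Fin N → ℕ} {edim : ι → ℕ}
  (A B : ∀ e : ι, (PiLp 2 fun i : Fin N => EuclideanSpace ℝ (Fin (ndim i))) →L[ℝ]
    EuclideanSpace ℝ (Fin (edim e)))

noncomputable def constraintMap :
    (PiLp 2 fun i : Fin N => EuclideanSpace ℝ (Fin (ndim i))) →L[ℝ]
      PiLp 2 fun e : ι => EuclideanSpace ℝ (Fin (edim e)) :=
  (PiLp.continuousLinearEquiv 2 ℝ _).symm.toContinuousLinearMap.comp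
    (ContinuousLinearMap.pi fun e => A e - B e)

variable (lam : PiLp 2 fun e : ι => EuclideanSpace ℝ (Fin (edim e)))
  (x : PiLp 2 fun i : Fin N => EuclideanSpace ℝ (Fin (ndim i)))

theorem constraintMap_apply (e : ι) : constraintMap A B x e = A e x - B e x :=
  rfl

variable [Fintype ι]

theorem inner_constraintMap :
    ⟪lam, constraintMap A B x⟫ = ∑ e, (⟪lam e, A e x⟫ - ⟪lam e, B e x⟫) := by
  rw [PiLp.inner_apply]
  simp only [constraintMap_apply, inner_sub_right]

theorem inner_constraintMap_eq_inner_adjoint :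
    ⟪lam, constraintMap A B x⟫ = ⟪∑ e, (A e).adjoint (lam e) - ∑ e, (B e).adjoint (lam e), x⟫ := by
  simp only [inner_constraintMap, inner_sub_left, sum_inner,
    ContinuousLinearMap.adjoint_inner_left, Finset.sum_sub_distrib]

theorem sum_nodeLagrangian (s t : ι → Fin N) (Fc : ∀ i, EuclideanSpace ℝ (Fin (ndim i)) → ℝ) :
    ∑ i, nodeLagrangian ndim edim s t Fc A B i lam x =
      ∑ i, Fc i (x i) + ⟪lam, constraintMap A B x⟫ := by
  classical
  simp only [nodeLagrangian, inner_constraintMap, Finset.sum_sub_distrib, Finset.sum_add_distrib,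
    Finset.sum_fiberwise, add_sub_assoc]

variable {lam x}

theorem sum_nodeLagrangian_le_of_subgradient (s t : ι → Fin N)
    {Fc : ∀ i, EuclideanSpace ℝ (Fin (ndim i)) → ℝ}
    {g : PiLp 2 fun i : Fin N => EuclideanSpace ℝ (Fin (ndim i))}
    (hg : ∀ i y, Fc i (x i) + ⟪g i, y - x i⟫ ≤ Fc i y)
    (hstat : g + ∑ e, (A e).adjoint (lam e) - ∑ e, (B e).adjoint (lam e) = 0)
    (y : PiLp 2 fun i : Fin N => EuclideanSpace ℝ (Fin (ndim i))) :
    ∑ i, nodeLagrangian ndim edim s t Fc A B i lam x ≤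
      ∑ i, nodeLagrangian ndim edim s t Fc A B i lam y := by
  have hg_sum : ∑ i, Fc i (x i) + ⟪g, y - x⟫ ≤ ∑ i, Fc i (y i) := by
    simpa only [PiLp.inner_apply, PiLp.sub_apply, Finset.sum_add_distrib]
      using Finset.sum_le_sum fun i _ => hg i (y i)
  have hg_eq : g = -(∑ e, (A e).adjoint (lam e) - ∑ e, (B e).adjoint (lam e)) := by
    rw [← sub_eq_zero, sub_neg_eq_add, ← hstat]; abel
  rw [hg_eq, inner_neg_left, inner_sub_right] at hg_sum
  rw [sum_nodeLagrangian, sum_nodeLagrangian, inner_constraintMap_eq_inner_adjoint,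
    inner_constraintMap_eq_inner_adjoint]
  linarith

end

theorem lemma1_dual_radially_unbounded_general
    {N : ℕ} {ι : Type*} [Fintype ι]
    (ndim : Fin N → ℕ) (edim : ι → ℕ)
    -- the edges `(i, j) ∈ Ē`, i.e. `s e < t e`
    (s t : ι → Fin N)
    -- selection maps: `A e x` depends only on `x (s e)`, `B e x` only on `x (t e)`
    (A B : ∀ e : ι,
      (PiLp 2 fun i : Fin N => EuclideanSpace ℝ (Fin (ndim i))) →L[ℝ]
        EuclideanSpace ℝ (Fin (edim e)))
    -- convex costs and convex constraint sets
    (Fc : ∀ i : Fin N, EuclideanSpace ℝ (Fin (ndim i)) → ℝ)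
    (hFc : ∀ i, ConvexOn ℝ Set.univ (Fc i))
    -- (a) minimizers of `l_i(·, λ)` over `𝒳_i` …
    (xstar : (PiLp 2 fun e : ι => EuclideanSpace ℝ (Fin (edim e))) →
      PiLp 2 fun i : Fin N => EuclideanSpace ℝ (Fin (ndim i)))
    -- … with a subgradient `g_i ∈ ∂F_i(x*_{λ,i})` satisfying the stationarity condition
    (grad : (PiLp 2 fun e : ι => EuclideanSpace ℝ (Fin (edim e))) →
      PiLp 2 fun i : Fin N => EuclideanSpace ℝ (Fin (ndim i)))
    (hgrad : ∀ lam (i : Fin N) (y : EuclideanSpace ℝ (Fin (ndim i))),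
      Fc i (xstar lam i) + ⟪grad lam i, y - xstar lam i⟫ ≤ Fc i y)
    (hstat : ∀ lam : PiLp 2 fun e : ι => EuclideanSpace ℝ (Fin (edim e)),
      grad lam
        + ∑ e : ι, (ContinuousLinearMap.adjoint (A e)) (lam e)
        - ∑ e : ι, (ContinuousLinearMap.adjoint (B e)) (lam e) = 0)
    -- (b) the stacked constraint map `H x = (A e x − B e x)_e` has full row rank
    (hsurj : Function.Surjective
      fun x : PiLp 2 fun i : Fin N => EuclideanSpace ℝ (Fin (ndim i)) =>
        (WithLp.toLp 2 (fun e => A e x - B e x) : PiLp 2 fun e : ι => EuclideanSpace ℝ (Fin (edim e)))) :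
    -- the dual function `Q(λ) = Σ_i q_i(λ) = Σ_i l_i(x*_{λ,i}, λ)` is radially unbounded
    Tendsto
      (fun lam : PiLp 2 fun e : ι => EuclideanSpace ℝ (Fin (edim e)) =>
        ∑ i : Fin N, nodeLagrangian ndim edim s t Fc A B i lam (xstar lam))
      (Bornology.cobounded _) atBot := by
  have hcont : Continuous fun y : PiLp 2 fun i : Fin N => EuclideanSpace ℝ (Fin (ndim i)) =>
      ∑ i, Fc i (y i) :=
    continuous_finsetSum _ fun i _ =>
      (continuousOn_univ.mp ((hFc i).continuousOn isOpen_univ)).comp (PiLp.continuous_apply 2 _ i)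
  refine tendsto_cobounded_atBot_of_le_add_inner hcont (H := (constraintMap A B).toLinearMap) hsurj
    fun lam y => ?_
  calc _ ≤ ∑ i, nodeLagrangian ndim edim s t Fc A B i lam y :=
        sum_nodeLagrangian_le_of_subgradient A B s t (hgrad lam) (hstat lam) y
    _ = _ := sum_nodeLagrangian A B lam y s t Fc

/-- **Lemma 1.** Under (a) existence of minimizers `x*_{λ,i}` of `l_i(·,λ)` on `𝒳_i` together
with the subgradient stationarity condition, (b) linear independence (full row rank) of the
stacked constraints, and (c) the interiority condition `M_{ij} + εB ⊆ X̄_{ij} ∩ X̄_{ji}`, the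
dual function `Q(λ) = Σ_i l_i(x*_{λ,i}, λ)` is radially unbounded: `Q(λ) → −∞` as `|λ| → ∞`. -/
theorem lemma1_dual_radially_unbounded
    {N : ℕ} {ι : Type*} [Fintype ι]
    (ndim : Fin N → ℕ) (edim : ι → ℕ)
    -- the edges `(i, j) ∈ Ē`, i.e. `s e < t e`
    (s t : ι → Fin N) (hst : ∀ e, s e < t e)
    -- selection maps: `A e x` depends only on `x (s e)`, `B e x` only on `x (t e)`
    (A B : ∀ e : ι,
      (PiLp 2 fun i : Fin N => EuclideanSpace ℝ (Fin (ndim i))) →L[ℝ]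
        EuclideanSpace ℝ (Fin (edim e)))
    (hA : ∀ e (x y : PiLp 2 fun i : Fin N => EuclideanSpace ℝ (Fin (ndim i))),
      x (s e) = y (s e) → A e x = A e y)
    (hB : ∀ e (x y : PiLp 2 fun i : Fin N => EuclideanSpace ℝ (Fin (ndim i))),
      x (t e) = y (t e) → B e x = B e y)
    -- convex costs and convex constraint sets
    (Fc : ∀ i : Fin N, EuclideanSpace ℝ (Fin (ndim i)) → ℝ)
    (hFc : ∀ i, ConvexOn ℝ Set.univ (Fc i))
    (𝒳 : ∀ i : Fin N, Set (EuclideanSpace ℝ (Fin (ndim i))))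
    (h𝒳 : ∀ i, Convex ℝ (𝒳 i))
    -- (a) minimizers of `l_i(·, λ)` over `𝒳_i` …
    (xstar : (PiLp 2 fun e : ι => EuclideanSpace ℝ (Fin (edim e))) →
      PiLp 2 fun i : Fin N => EuclideanSpace ℝ (Fin (ndim i)))
    (hxmem : ∀ lam i, xstar lam i ∈ 𝒳 i)
    (hxmin : ∀ lam (i : Fin N) (y : EuclideanSpace ℝ (Fin (ndim i))), y ∈ 𝒳 i →
      nodeLagrangian ndim edim s t Fc A B i lam (xstar lam) ≤
        nodeLagrangian ndim edim s t Fc A B i lam (WithLp.toLp 2 (Function.update (xstar lam) i y)))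
    -- … with a subgradient `g_i ∈ ∂F_i(x*_{λ,i})` satisfying the stationarity condition
    (grad : (PiLp 2 fun e : ι => EuclideanSpace ℝ (Fin (edim e))) →
      PiLp 2 fun i : Fin N => EuclideanSpace ℝ (Fin (ndim i)))
    (hgrad : ∀ lam (i : Fin N) (y : EuclideanSpace ℝ (Fin (ndim i))),
      Fc i (xstar lam i) + ⟪grad lam i, y - xstar lam i⟫ ≤ Fc i y)
    (hstat : ∀ lam : PiLp 2 fun e : ι => EuclideanSpace ℝ (Fin (edim e)),
      grad lam
        + ∑ e : ι, (ContinuousLinearMap.adjoint (A e)) (lam e)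
        - ∑ e : ι, (ContinuousLinearMap.adjoint (B e)) (lam e) = 0)
    -- (b) the stacked constraint map `H x = (A e x − B e x)_e` has full row rank
    (hsurj : Function.Surjective
      fun x : PiLp 2 fun i : Fin N => EuclideanSpace ℝ (Fin (ndim i)) =>
        (WithLp.toLp 2 (fun e => A e x - B e x) : PiLp 2 fun e : ι => EuclideanSpace ℝ (Fin (edim e))))
    -- (c) interiority: `M_{ij} + εB ⊆ X̄_{ij} ∩ X̄_{ji}`
    (hint : ∀ e : ι, ∃ ε > (0 : ℝ),
      ∃ M : Set (EuclideanSpace ℝ (Fin (edim e))), M.Nonempty ∧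
        M + ε • Metric.closedBall (0 : EuclideanSpace ℝ (Fin (edim e))) 1 ⊆
          {z | ∃ x : PiLp 2 fun i : Fin N => EuclideanSpace ℝ (Fin (ndim i)),
              x (s e) ∈ 𝒳 (s e) ∧ z = A e x} ∩
          {z | ∃ x : PiLp 2 fun i : Fin N => EuclideanSpace ℝ (Fin (ndim i)),
              x (t e) ∈ 𝒳 (t e) ∧ z = B e x}) :
    -- the dual function `Q(λ) = Σ_i q_i(λ) = Σ_i l_i(x*_{λ,i}, λ)` is radially unbounded
    Tendsto
      (fun lam : PiLp 2 fun e : ι => EuclideanSpace ℝ (Fin (edim e)) =>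
        ∑ i : Fin N, nodeLagrangian ndim edim s t Fc A B i lam (xstar lam))
      (Bornology.cobounded _) atBot :=
  lemma1_dual_radially_unbounded_general ndim edim s t A B Fc hFc xstar grad hgrad hstat hsurj
end

section
/- If v_k ≠ ∅ for infinitely many k, then the sequence (ᾱ_k) satisfies Σ_{k=0}^∞ ᾱ_k² < ∞ and Σ_{k=0}^∞ ᾱ_k = ∞. (Lemma 3) -/
open Filter

/-- **Lemma 3.** If blocks update (`v_k ≠ ∅`) infinitely often, then the sequence
`ᾱ_k := max_{i ∈ v_{k+1}} α_i(γ_{k,i})` (with `ᾱ_k = 0` when `v_{k+1} = ∅`) is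
square summable but not summable. -/
theorem abar_square_summable_not_summable
    {d : ℕ} (hd : 1 ≤ d)
    (α : Fin d → ℕ → ℝ)
    (hpos : ∀ i m, 0 < α i m)
    (hdiv : ∀ i, ¬ Summable (α i))
    (hsq : ∀ i, Summable fun m => α i m ^ 2)
    (v : ℕ → Finset (Fin d))
    (γ : ℕ → Fin d → ℕ)
    (hγ : ∀ k i, γ k i = ((Finset.range k).filter fun l => i ∈ v (l + 1)).card)
    (abar : ℕ → ℝ)
    (habar : ∀ k, abar k = ⨆ i : {j : Fin d // j ∈ v (k + 1)}, α i.1 (γ k i.1))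
    (hio : ∃ᶠ k in atTop, (v (k + 1)).Nonempty) :
    (Summable fun k => abar k ^ 2) ∧ ¬ Summable abar := by
  -- γ in terms of Nat.count
  have hγc : ∀ k i, γ k i = Nat.count (fun l => i ∈ v (l + 1)) k := by
    intro k i
    rw [hγ, Nat.count_eq_card_filter_range]
  -- abar is nonneg and bounds each term
  have habar_le : ∀ k, ∀ i ∈ v (k + 1), α i (γ k i) ≤ abar k := by
    intro k i hi
    rw [habar]
    exact le_ciSup (f := fun j : {j : Fin d // j ∈ v (k + 1)} => α j.1 (γ k j.1))
      (Set.Finite.bddAbove (Set.finite_range _)) ⟨i, hi⟩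
  have habar_nonneg : ∀ k, 0 ≤ abar k := by
    intro k
    rcases (v (k + 1)).eq_empty_or_nonempty with h | hne
    · rw [habar]
      have : IsEmpty {j : Fin d // j ∈ v (k + 1)} := by
        constructor; rintro ⟨j, hj⟩; simp [h] at hj
      simp [Real.iSup_of_isEmpty]
    · obtain ⟨i, hi⟩ := hne
      exact le_trans (hpos i (γ k i)).le (habar_le k i hi)
  -- abar is attained when nonempty: abar k ≤ sum of squares bound
  have key : ∀ k, abar k ^ 2 ≤ ∑ i ∈ v (k + 1), α i (γ k i) ^ 2 := by
    intro k
    rcases (v (k + 1)).eq_empty_or_nonempty with h | hne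
    · have : IsEmpty {j : Fin d // j ∈ v (k + 1)} := by
        constructor; rintro ⟨j, hj⟩; simp [h] at hj
      rw [habar]
      simp [Real.iSup_of_isEmpty, h]
    · -- sup attained
      have : Nonempty {j : Fin d // j ∈ v (k + 1)} := ⟨⟨hne.choose, hne.choose_spec⟩⟩
      obtain ⟨⟨i, hi⟩, hattain⟩ :=
        Finite.exists_max (fun j : {j : Fin d // j ∈ v (k + 1)} => α j.1 (γ k j.1))
      have heq : abar k = α i (γ k i) :=
        le_antisymm (by rw [habar]; exact ciSup_le hattain) (habar_le k i hi)
      rw [heq]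
      exact Finset.single_le_sum (fun j _ => sq_nonneg (α j (γ k j))) hi
  constructor
  · -- square summable
    have hs : ∀ i : Fin d, Summable fun k =>
        if i ∈ v (k + 1) then α i (γ k i) ^ 2 else 0 := by
      intro i
      apply summable_of_sum_range_le (c := ∑' m, α i m ^ 2)
      · intro n; split <;> [exact sq_nonneg _; rfl]
      · intro n
        rw [← Finset.sum_filter]
        have hinj : Set.InjOn (fun k => γ k i)
            ((Finset.range n).filter fun k => i ∈ v (k + 1)) := by
          intro a ha b hb habeq
          have habg : γ a i = γ b i := habeq
          simp only [Finset.coe_filter, Set.mem_setOf_eq, Finset.mem_range] at ha hb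
          by_contra hne
          rcases Nat.lt_or_ge a b with h | h
          · have : γ a i < γ b i := by
              rw [hγc, hγc]
              calc Nat.count (fun l => i ∈ v (l + 1)) a
                  < Nat.count (fun l => i ∈ v (l + 1)) (a + 1) := by
                    rw [Nat.count_succ]; simp [ha.2]
                _ ≤ Nat.count (fun l => i ∈ v (l + 1)) b :=
                    Nat.count_monotone _ h
            omega
          · rcases Nat.lt_or_ge b a with h' | h'
            · have : γ b i < γ a i := by
                rw [hγc, hγc]
                calc Nat.count (fun l => i ∈ v (l + 1)) b
                    < Nat.count (fun l => i ∈ v (l + 1)) (b + 1) := by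
                      rw [Nat.count_succ]; simp [hb.2]
                  _ ≤ Nat.count (fun l => i ∈ v (l + 1)) a :=
                      Nat.count_monotone _ h'
              omega
            · omega
        calc ∑ k ∈ (Finset.range n).filter (fun k => i ∈ v (k + 1)), α i (γ k i) ^ 2
            = ∑ m ∈ ((Finset.range n).filter fun k => i ∈ v (k + 1)).image
                (fun k => γ k i), α i m ^ 2 := by
              rw [Finset.sum_image fun a ha b hb h => hinj ha hb h]
          _ ≤ ∑' m, α i m ^ 2 := by
              apply Summable.sum_le_tsum _ (fun m _ => sq_nonneg _) (hsq i)
    have hsum : Summable fun k => ∑ i : Fin d,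
        if i ∈ v (k + 1) then α i (γ k i) ^ 2 else 0 :=
      summable_sum fun i _ => hs i
    apply hsum.of_nonneg_of_le (fun k => sq_nonneg _)
    intro k
    calc abar k ^ 2 ≤ ∑ i ∈ v (k + 1), α i (γ k i) ^ 2 := key k
      _ = ∑ i : Fin d, if i ∈ v (k + 1) then α i (γ k i) ^ 2 else 0 := by
          rw [Finset.sum_ite_mem, Finset.univ_inter]
  · -- not summable
    intro hS
    -- pigeonhole: some i occurs infinitely often
    have hinf : {k | (v (k + 1)).Nonempty}.Infinite :=
      Nat.frequently_atTop_iff_infinite.mp hio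
    have : ∃ i : Fin d, {k | i ∈ v (k + 1)}.Infinite := by
      by_contra h
      push_neg at h
      have : {k | (v (k + 1)).Nonempty} ⊆ ⋃ i : Fin d, {k | i ∈ v (k + 1)} := by
        rintro k ⟨i, hi⟩
        exact Set.mem_iUnion.mpr ⟨i, hi⟩
      exact hinf ((Set.finite_iUnion h).subset this)
    obtain ⟨i, hi⟩ := this
    set p : ℕ → Prop := fun k => i ∈ v (k + 1) with hp
    have hinf' : (setOf p).Infinite := hi
    have hcomp : Summable (abar ∘ Nat.nth p) :=
      hS.comp_injective (Nat.nth_injective hinf')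
    apply hdiv i
    apply Summable.of_nonneg_of_le (fun n => (hpos i n).le) _ hcomp
    intro n
    have hmem : i ∈ v (Nat.nth p n + 1) := Nat.nth_mem_of_infinite hinf' n
    have : γ (Nat.nth p n) i = n := by
      rw [hγc]; exact Nat.count_nth_of_infinite hinf' n
    calc α i n = α i (γ (Nat.nth p n) i) := by rw [this]
      _ ≤ abar (Nat.nth p n) := habar_le _ i hmem
end

section
/- Let (p_k), (a_k), (w_k), (u_k) be sequences of nonnegative, integrable, F_k-measurable random variables such that for every k, E[p_{k+1} | F_k] ≤ (1 + a_k) p_k − u_k + w_k almost surely, and such that Σ_{k=0}^∞ a_k < ∞ and Σ_{k=0}^∞ w_k < ∞ almost surely. Then, almost surely, the sequence (p_k) converges to a finite nonnegative random variable and Σ_{k=0}^∞ u_k < ∞. (Lemma 4, Robbins–Siegmund) -/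
/-! Dividing by the discount factors `A_n = ∏_{j<n} (1 + a_j)` turns the recursion into the
supermartingale `q_n = p_n / A_n + ∑_{j<n} (u_j - w_j) / A_{j+1}`, which is bounded below by
`-S_n` with `S_n = ∑_{j<n} w_j / A_{j+1}` nondecreasing and predictable. Stopping `q` just before
`S` exceeds a level `M` gives a supermartingale bounded below by `-M`, hence a.s. convergent; on
`{∑ w_k < ∞}` this stopping never happens once `M ≥ ∑ w_k`, so `q` converges there. Since
`∑ a_k < ∞`, `A_n` converges, and the two nonnegative parts `p_n / A_n` and `∑_{j<n} u_j / A_{j+1}`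
of the convergent `q_n + S_n` inherit convergence, which transfers back to `p_n` and `∑ u_k`. -/

open MeasureTheory Filter Finset
open scoped Topology

/-- The martingale transform of `q` by the predictable indicator of `∑_{j ≤ k} v j ≤ M`: for
nonnegative `v` it is `q` stopped just before the partial sums of `v` exceed `M`. -/
noncomputable def stopWhenSumExceeds (q v : ℕ → ℝ) (M : ℝ) (n : ℕ) : ℝ :=
  q 0 + ∑ k ∈ range n, (if ∑ j ∈ range (k + 1), v j ≤ M then 1 else 0) * (q (k + 1) - q k)

section StopWhenSumExceeds

variable {q v : ℕ → ℝ} {M : ℝ}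

theorem stopWhenSumExceeds_succ (n : ℕ) :
    stopWhenSumExceeds q v M (n + 1) = stopWhenSumExceeds q v M n +
      (if ∑ j ∈ range (n + 1), v j ≤ M then 1 else 0) * (q (n + 1) - q n) := by
  simp only [stopWhenSumExceeds, sum_range_succ _ n]
  ring

theorem stopWhenSumExceeds_eq_of_sum_le (hv : ∀ n, 0 ≤ v n) {n : ℕ}
    (hn : ∑ j ∈ range n, v j ≤ M) : stopWhenSumExceeds q v M n = q n := by
  induction n with
  | zero => simp [stopWhenSumExceeds]
  | succ n ih =>
    have hle : ∑ j ∈ range n, v j ≤ M := by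
      linarith [sum_range_succ v n, hv n]
    rw [stopWhenSumExceeds_succ, ih hle, if_pos hn]
    ring

theorem neg_le_stopWhenSumExceeds (hv : ∀ n, 0 ≤ v n) (hq : ∀ n, -∑ j ∈ range n, v j ≤ q n)
    (hM : 0 ≤ M) (n : ℕ) : -M ≤ stopWhenSumExceeds q v M n := by
  induction n with
  | zero => simpa [stopWhenSumExceeds] using (neg_nonpos.2 hM).trans (by simpa using hq 0)
  | succ n ih =>
    by_cases hn : ∑ j ∈ range (n + 1), v j ≤ M
    · rw [stopWhenSumExceeds_eq_of_sum_le hv hn]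
      linarith [hq (n + 1)]
    · rwa [stopWhenSumExceeds_succ, if_neg hn, zero_mul, add_zero]

end StopWhenSumExceeds

theorem summable_and_tendsto_of_tendsto_add_sum {x y : ℕ → ℝ} {L : ℝ} (hx : ∀ n, 0 ≤ x n)
    (hy : ∀ n, 0 ≤ y n) (h : Tendsto (fun n => x n + ∑ j ∈ range n, y j) atTop (𝓝 L)) :
    Summable y ∧ Tendsto x atTop (𝓝 (L - ∑' j, y j)) := by
  obtain ⟨C, hC⟩ := h.bddAbove_range
  have hy_sum : Summable y := summable_of_sum_range_le hy fun n =>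
    (le_add_of_nonneg_left (hx n)).trans (hC ⟨n, rfl⟩)
  refine ⟨hy_sum, (h.sub hy_sum.hasSum.tendsto_sum_nat).congr fun n => ?_⟩
  ring

namespace MeasureTheory

variable {Ω : Type*} {m0 : MeasurableSpace Ω} {μ : Measure Ω} [IsFiniteMeasure μ]
  {ℱ : Filtration ℕ m0} {f : ℕ → Ω → ℝ}

theorem Supermartingale.exists_ae_tendsto_of_bddBelow {R : ℝ} (hf : Supermartingale f ℱ μ)
    (hR : ∀ n ω, R ≤ f n ω) : ∀ᵐ ω ∂μ, ∃ c, Tendsto (fun n => f n ω) atTop (𝓝 c) := by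
  have hbdd : ∀ n, eLpNorm (-f n) 1 μ ≤ (∫ ω, f 0 ω ∂μ + 2 * |R| * μ.real Set.univ).toNNReal := by
    intro n
    rw [eLpNorm_neg, eLpNorm_one_eq_lintegral_enorm,
      ← ofReal_integral_norm_eq_lintegral_enorm (hf.integrable n)]
    refine ENNReal.ofReal_le_ofReal ?_
    calc ∫ ω, ‖f n ω‖ ∂μ ≤ ∫ ω, (f n ω + 2 * |R|) ∂μ :=
          integral_mono (hf.integrable n).norm ((hf.integrable n).add (integrable_const _))
            fun ω => abs_le.2 ⟨by linarith [hR n ω, neg_abs_le R], by linarith [abs_nonneg R]⟩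
      _ = ∫ ω, f n ω ∂μ + 2 * |R| * μ.real Set.univ := by
          rw [integral_add (hf.integrable n) (integrable_const _), integral_const, smul_eq_mul,
            mul_comm]
      _ ≤ ∫ ω, f 0 ω ∂μ + 2 * |R| * μ.real Set.univ := by
          have h := hf.setIntegral_le (Nat.zero_le n) MeasurableSet.univ
          rw [Measure.restrict_univ] at h
          linarith
  filter_upwards [hf.neg.exists_ae_tendsto_of_bdd hbdd] with ω ⟨c, hc⟩
  exact ⟨-c, by simpa using hc.neg⟩

theorem Supermartingale.stopWhenSumExceeds {v : ℕ → Ω → ℝ} (hf : Supermartingale f ℱ μ)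
    (hv : StronglyAdapted ℱ v) (M : ℝ) :
    Supermartingale (fun n ω => stopWhenSumExceeds (f · ω) (v · ω) M n) ℱ μ := by
  set ξ : ℕ → Ω → ℝ := fun k ω => if ∑ j ∈ range (k + 1), v j ω ≤ M then 1 else 0
  have hξ : StronglyAdapted ℱ ξ := fun k =>
    (Measurable.ite (measurableSet_le (Finset.measurable_sum _ fun j hj =>
      (hv j).measurable.mono (ℱ.mono (by simpa [Nat.lt_succ_iff] using hj)) le_rfl)
      measurable_const) measurable_const measurable_const).stronglyMeasurable
  have hsub := (hf.neg.sum_mul_sub hξ (R := 1) (fun k ω => by unfold ξ; split_ifs <;> norm_num)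
    (fun k ω => by unfold ξ; split_ifs <;> norm_num)).add_martingale
    (martingale_const_fun ℱ μ (hf.stronglyMeasurable 0) (hf.integrable 0)).neg
  have heq : (fun n ω => _root_.stopWhenSumExceeds (f · ω) (v · ω) M n) =
      -((fun n => ∑ k ∈ range n, ξ k * ((-f) (k + 1) - (-f) k)) + -fun _ => f 0) := by
    funext n ω
    simp only [_root_.stopWhenSumExceeds, ξ, Pi.neg_apply, Pi.add_apply, Finset.sum_apply,
      Pi.mul_apply, Pi.sub_apply]
    rw [neg_add, neg_neg, ← sum_neg_distrib, add_comm]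
    congr 1
    exact sum_congr rfl fun k _ => by ring
  rw [heq]
  exact hsub.neg

theorem Supermartingale.ae_exists_tendsto_of_neg_sum_le {v : ℕ → Ω → ℝ}
    (hf : Supermartingale f ℱ μ) (hv : StronglyAdapted ℱ v) (hv_nonneg : ∀ n ω, 0 ≤ v n ω)
    (hfv : ∀ n ω, -∑ j ∈ range n, v j ω ≤ f n ω) :
    ∀ᵐ ω ∂μ, Summable (v · ω) → ∃ c, Tendsto (fun n => f n ω) atTop (𝓝 c) := by
  have hstopped : ∀ᵐ ω ∂μ, ∀ M : ℕ, ∃ c,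
      Tendsto (fun n => _root_.stopWhenSumExceeds (f · ω) (v · ω) M n) atTop (𝓝 c) :=
    ae_all_iff.2 fun M => (hf.stopWhenSumExceeds hv M).exists_ae_tendsto_of_bddBelow
      fun n ω => neg_le_stopWhenSumExceeds (hv_nonneg · ω) (hfv · ω) M.cast_nonneg n
  filter_upwards [hstopped] with ω hω hsum
  obtain ⟨M, hM⟩ := exists_nat_ge (∑' n, v n ω)
  have heq (n : ℕ) : _root_.stopWhenSumExceeds (f · ω) (v · ω) M n = f n ω :=
    stopWhenSumExceeds_eq_of_sum_le (hv_nonneg · ω)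
      ((hsum.sum_le_tsum _ fun j _ => hv_nonneg j ω).trans hM)
  simpa only [heq] using hω M

end MeasureTheory

namespace RobbinsSiegmund

noncomputable def discount (a : ℕ → ℝ) (n : ℕ) : ℝ := (∏ j ∈ range n, (1 + a j))⁻¹

noncomputable def discounted (p a w u : ℕ → ℝ) (n : ℕ) : ℝ :=
  discount a n * p n + ∑ j ∈ range n, discount a (j + 1) * (u j - w j)

section Deterministic

variable {p a w u : ℕ → ℝ}

theorem one_le_prod_one_add (ha : ∀ n, 0 ≤ a n) (n : ℕ) : 1 ≤ ∏ j ∈ range n, (1 + a j) :=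
  one_le_prod fun j _ => le_add_of_nonneg_right (ha j)

theorem discount_pos (ha : ∀ n, 0 ≤ a n) (n : ℕ) : 0 < discount a n :=
  inv_pos.2 (zero_lt_one.trans_le (one_le_prod_one_add ha n))

theorem discount_le_one (ha : ∀ n, 0 ≤ a n) (n : ℕ) : discount a n ≤ 1 :=
  inv_le_one_of_one_le₀ (one_le_prod_one_add ha n)

theorem discount_mul_prod (ha : ∀ n, 0 ≤ a n) (n : ℕ) :
    discount a n * ∏ j ∈ range n, (1 + a j) = 1 :=
  inv_mul_cancel₀ (zero_lt_one.trans_le (one_le_prod_one_add ha n)).ne'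

theorem one_add_mul_discount_succ (ha : ∀ n, 0 ≤ a n) (n : ℕ) :
    (1 + a n) * discount a (n + 1) = discount a n := by
  rw [discount, discount, prod_range_succ, mul_inv, ← mul_assoc, mul_comm (1 + a n),
    mul_assoc, mul_inv_cancel₀ (by linarith [ha n]), mul_one]

theorem neg_sum_le_discounted (hp : ∀ n, 0 ≤ p n) (ha : ∀ n, 0 ≤ a n) (hu : ∀ n, 0 ≤ u n)
    (n : ℕ) : -∑ j ∈ range n, discount a (j + 1) * w j ≤ discounted p a w u n := by
  rw [discounted, ← zero_add (-_), ← sum_neg_distrib]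
  gcongr with j
  · exact mul_nonneg (discount_pos ha n).le (hp n)
  · nlinarith [discount_pos ha (j + 1), hu j]

theorem summable_discount_mul (ha : ∀ n, 0 ≤ a n) (hw : ∀ n, 0 ≤ w n) (hw_sum : Summable w) :
    Summable fun j => discount a (j + 1) * w j :=
  hw_sum.of_nonneg_of_le (fun j => mul_nonneg (discount_pos ha _).le (hw j))
    fun j => mul_le_of_le_one_left (hw j) (discount_le_one ha _)

theorem exists_tendsto_and_summable_of_tendsto_discounted (hp : ∀ n, 0 ≤ p n)
    (ha : ∀ n, 0 ≤ a n) (hw : ∀ n, 0 ≤ w n) (hu : ∀ n, 0 ≤ u n) (ha_sum : Summable a)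
    (hw_sum : Summable w) {ℓ : ℝ} (h : Tendsto (discounted p a w u) atTop (𝓝 ℓ)) :
    (∃ L, 0 ≤ L ∧ Tendsto p atTop (𝓝 L)) ∧ Summable u := by
  have hprod : Tendsto (fun n => ∏ j ∈ range n, (1 + a j)) atTop (𝓝 (∏' j, (1 + a j))) :=
    (Real.multipliable_one_add_of_summable ha_sum).hasProd.tendsto_prod_nat
  obtain ⟨C, hC⟩ := hprod.bddAbove_range
  have hsum : Tendsto (fun n => discount a n * p n + ∑ j ∈ range n, discount a (j + 1) * u j)
      atTop (𝓝 (ℓ + ∑' j, discount a (j + 1) * w j)) :=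
    (h.add (summable_discount_mul ha hw hw_sum).hasSum.tendsto_sum_nat).congr fun n => by
      simp only [discounted, mul_sub, sum_sub_distrib]
      ring
  obtain ⟨hud, hpd⟩ := summable_and_tendsto_of_tendsto_add_sum
    (fun n => mul_nonneg (discount_pos ha n).le (hp n))
    (fun j => mul_nonneg (discount_pos ha _).le (hu j)) hsum
  have hp_lim : Tendsto p atTop (𝓝 _) := (hpd.mul hprod).congr fun n => by
    rw [mul_right_comm, discount_mul_prod ha, one_mul]
  refine ⟨⟨_, ge_of_tendsto' hp_lim hp, hp_lim⟩, hud.mul_left C |>.of_nonneg_of_le hu fun j => ?_⟩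
  calc u j = (discount a (j + 1) * u j) * ∏ i ∈ range (j + 1), (1 + a i) := by
        rw [mul_right_comm, discount_mul_prod ha, one_mul]
    _ ≤ C * (discount a (j + 1) * u j) := by
        rw [mul_comm]
        exact mul_le_mul_of_nonneg_right (hC ⟨j + 1, rfl⟩)
          (mul_nonneg (discount_pos ha _).le (hu j))

end Deterministic

section Random

variable {Ω : Type*} {m0 : MeasurableSpace Ω} {μ : Measure Ω} {ℱ : Filtration ℕ m0}
  {p a w u : ℕ → Ω → ℝ}

theorem stronglyMeasurable_discount (ha : StronglyAdapted ℱ a) {k n : ℕ} (hk : k ≤ n + 1) :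
    StronglyMeasurable[ℱ n] fun ω => discount (a · ω) k :=
  (Finset.measurable_prod _ fun j hj => measurable_const.add
    ((ha j).measurable.mono (ℱ.mono (by simp at hj; omega)) le_rfl)).inv.stronglyMeasurable

theorem integrable_discount_mul (ha : StronglyAdapted ℱ a) (ha_nonneg : ∀ n ω, 0 ≤ a n ω)
    {f : Ω → ℝ} (hf : Integrable f μ) (k : ℕ) :
    Integrable (fun ω => discount (a · ω) k * f ω) μ :=
  hf.bdd_mul ((stronglyMeasurable_discount ha k.le_succ).mono (ℱ.le k)).aestronglyMeasurable
    (c := 1) (ae_of_all _ fun ω => by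
      rw [Real.norm_of_nonneg (discount_pos (ha_nonneg · ω) k).le]
      exact discount_le_one (ha_nonneg · ω) k)

variable [IsFiniteMeasure μ]

theorem supermartingale_discounted (hp : StronglyAdapted ℱ p) (ha : StronglyAdapted ℱ a)
    (hw : StronglyAdapted ℱ w) (hu : StronglyAdapted ℱ u) (hp_int : ∀ n, Integrable (p n) μ)
    (hw_int : ∀ n, Integrable (w n) μ) (hu_int : ∀ n, Integrable (u n) μ)
    (ha_nonneg : ∀ n ω, 0 ≤ a n ω)
    (hrec : ∀ n, μ[p (n + 1) | ℱ n] ≤ᵐ[μ] fun ω => (1 + a n ω) * p n ω - u n ω + w n ω) :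
    Supermartingale (fun n ω => discounted (p · ω) (a · ω) (w · ω) (u · ω) n) ℱ μ := by
  set D : ℕ → Ω → ℝ := fun n ω => ∑ j ∈ range n, discount (a · ω) (j + 1) * (u j ω - w j ω)
  have hD_meas {k n : ℕ} (hk : k ≤ n + 1) : StronglyMeasurable[ℱ n] (D k) :=
    (Finset.measurable_sum _ fun j hj => by
      have hj : j ≤ n := by simp at hj; omega
      exact (stronglyMeasurable_discount ha (by omega)).measurable.mul
        (((hu j).measurable.mono (ℱ.mono hj) le_rfl).sub
          ((hw j).measurable.mono (ℱ.mono hj) le_rfl))).stronglyMeasurable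
  have hD_int (n : ℕ) : Integrable (D n) μ :=
    integrable_finsetSum _ fun j _ =>
      integrable_discount_mul ha ha_nonneg ((hu_int j).sub (hw_int j)) (j + 1)
  have hpB_int (n : ℕ) : Integrable (fun ω => discount (a · ω) n * p n ω) μ :=
    integrable_discount_mul ha ha_nonneg (hp_int n) n
  refine supermartingale_nat (fun n => ?_) (fun n => (hpB_int n).add (hD_int n)) fun n => ?_
  · exact ((stronglyMeasurable_discount ha n.le_succ).mul (hp n)).add (hD_meas n.le_succ)
  have hsplit : μ[fun ω => discounted (p · ω) (a · ω) (w · ω) (u · ω) (n + 1) | ℱ n] =ᵐ[μ]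
      (fun ω => discount (a · ω) (n + 1)) * μ[p (n + 1) | ℱ n] + D (n + 1) := by
    have hB := stronglyMeasurable_discount ha (le_refl (n + 1))
    filter_upwards [condExp_add (m := ℱ n) (hpB_int (n + 1)) (hD_int (n + 1)),
      condExp_mul_of_stronglyMeasurable_left hB (hpB_int (n + 1)) (hp_int (n + 1))]
      with ω h_add h_mul
    rw [show (fun ω => discounted (p · ω) (a · ω) (w · ω) (u · ω) (n + 1)) =
      (fun ω => discount (a · ω) (n + 1) * p (n + 1) ω) + D (n + 1) from rfl, h_add,
      Pi.add_apply, condExp_of_stronglyMeasurable (ℱ.le n) (hD_meas le_rfl) (hD_int (n + 1))]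
    exact congrArg (· + D (n + 1) ω) h_mul
  filter_upwards [hsplit, hrec n] with ω h_split h_rec
  have hstep := one_add_mul_discount_succ (ha_nonneg · ω) n
  calc _ = discount (a · ω) (n + 1) * μ[p (n + 1) | ℱ n] ω + D (n + 1) ω := h_split
    _ ≤ discount (a · ω) (n + 1) * ((1 + a n ω) * p n ω - u n ω + w n ω) + D (n + 1) ω := by
        gcongr
        exact (discount_pos (ha_nonneg · ω) _).le
    _ = discounted (p · ω) (a · ω) (w · ω) (u · ω) n := by
        simp only [discounted, D, sum_range_succ]
        linear_combination p n ω * hstep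

end Random

end RobbinsSiegmund

open RobbinsSiegmund

theorem robbins_siegmund_general
    {Ω : Type*} {m0 : MeasurableSpace Ω} (μ : Measure Ω) [IsProbabilityMeasure μ]
    (ℱ : Filtration ℕ m0)
    (p a w u : ℕ → Ω → ℝ)
    (hp_meas : ∀ k, StronglyMeasurable[ℱ k] (p k))
    (ha_meas : ∀ k, StronglyMeasurable[ℱ k] (a k))
    (hw_meas : ∀ k, StronglyMeasurable[ℱ k] (w k))
    (hu_meas : ∀ k, StronglyMeasurable[ℱ k] (u k))
    (hp_int : ∀ k, Integrable (p k) μ)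
    (hw_int : ∀ k, Integrable (w k) μ)
    (hu_int : ∀ k, Integrable (u k) μ)
    (hp_nonneg : ∀ k ω, 0 ≤ p k ω)
    (ha_nonneg : ∀ k ω, 0 ≤ a k ω)
    (hw_nonneg : ∀ k ω, 0 ≤ w k ω)
    (hu_nonneg : ∀ k ω, 0 ≤ u k ω)
    (hrec : ∀ k, μ[p (k + 1) | ℱ k] ≤ᵐ[μ]
      fun ω => (1 + a k ω) * p k ω - u k ω + w k ω)
    (ha_sum : ∀ᵐ ω ∂μ, Summable fun k => a k ω)
    (hw_sum : ∀ᵐ ω ∂μ, Summable fun k => w k ω) :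
    ∀ᵐ ω ∂μ, (∃ L : ℝ, 0 ≤ L ∧ Tendsto (fun k => p k ω) atTop (𝓝 L)) ∧
      Summable fun k => u k ω := by
  have hq := supermartingale_discounted hp_meas ha_meas hw_meas hu_meas hp_int hw_int hu_int
    ha_nonneg hrec
  have hq_conv := hq.ae_exists_tendsto_of_neg_sum_le
    (v := fun j ω => discount (a · ω) (j + 1) * w j ω)
    (fun j => (stronglyMeasurable_discount ha_meas le_rfl).mul (hw_meas j))
    (fun j ω => mul_nonneg (discount_pos (ha_nonneg · ω) _).le (hw_nonneg j ω))
    fun n ω => neg_sum_le_discounted (hp_nonneg · ω) (ha_nonneg · ω) (hu_nonneg · ω) n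
  filter_upwards [hq_conv, ha_sum, hw_sum] with ω hq_ω ha_ω hw_ω
  obtain ⟨ℓ, hℓ⟩ := hq_ω (summable_discount_mul (ha_nonneg · ω) (hw_nonneg · ω) hw_ω)
  exact exists_tendsto_and_summable_of_tendsto_discounted (hp_nonneg · ω)
    (ha_nonneg · ω) (hw_nonneg · ω) (hu_nonneg · ω) ha_ω hw_ω hℓ

/-- **Lemma 4 (Robbins–Siegmund).** If nonnegative adapted integrable processes satisfy
`E[p_{k+1} | F_k] ≤ (1 + a_k) p_k − u_k + w_k` with `Σ a_k < ∞` and `Σ w_k < ∞` a.s.,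
then a.s. `(p_k)` converges to a finite nonnegative limit and `Σ u_k < ∞`. -/
theorem robbins_siegmund
    {Ω : Type*} {m0 : MeasurableSpace Ω} (μ : Measure Ω) [IsProbabilityMeasure μ]
    (ℱ : Filtration ℕ m0)
    (p a w u : ℕ → Ω → ℝ)
    (hp_meas : ∀ k, StronglyMeasurable[ℱ k] (p k))
    (ha_meas : ∀ k, StronglyMeasurable[ℱ k] (a k))
    (hw_meas : ∀ k, StronglyMeasurable[ℱ k] (w k))
    (hu_meas : ∀ k, StronglyMeasurable[ℱ k] (u k))
    (hp_int : ∀ k, Integrable (p k) μ)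
    (ha_int : ∀ k, Integrable (a k) μ)
    (hw_int : ∀ k, Integrable (w k) μ)
    (hu_int : ∀ k, Integrable (u k) μ)
    (hp_nonneg : ∀ k ω, 0 ≤ p k ω)
    (ha_nonneg : ∀ k ω, 0 ≤ a k ω)
    (hw_nonneg : ∀ k ω, 0 ≤ w k ω)
    (hu_nonneg : ∀ k ω, 0 ≤ u k ω)
    (hrec : ∀ k, μ[p (k + 1) | ℱ k] ≤ᵐ[μ]
      fun ω => (1 + a k ω) * p k ω - u k ω + w k ω)
    (ha_sum : ∀ᵐ ω ∂μ, Summable fun k => a k ω)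
    (hw_sum : ∀ᵐ ω ∂μ, Summable fun k => w k ω) :
    ∀ᵐ ω ∂μ, (∃ L : ℝ, 0 ≤ L ∧ Tendsto (fun k => p k ω) atTop (𝓝 L)) ∧
      Summable fun k => u k ω :=
  robbins_siegmund_general μ ℱ p a w u hp_meas ha_meas hw_meas hu_meas hp_int hw_int hu_int
    hp_nonneg ha_nonneg hw_nonneg hu_nonneg hrec ha_sum hw_sum
end

section
/- Let S ⊂ ℝ^n be nonempty and compact, and let V : ℝ^n → [0,∞) be continuous and radially unbounded (V(x) → ∞ as |x| → ∞) with V(x) = 0 if and only if x ∈ S. Then there exist class-K∞ functions ψ₁ and ψ₂ such that ψ₁(dist(x,S)) ≤ V(x) ≤ ψ₂(dist(x,S)) for all x ∈ ℝ^n. (claim established in the proof of Proposition 4) -/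
/-!
With `d(x) = infDist x S`, the lower envelope `a(r) = inf {V x | r ≤ d(x)}` and the upper
envelope `b(r) = sup {V x | d(x) ≤ r}` are monotone and satisfy `a(d(x)) ≤ V(x) ≤ b(d(x))`.
Radial unboundedness and continuity of `V`, which is positive off `S`, make `a` positive on
`(0, ∞)` and unbounded; compactness of `S` gives `b(0) = 0` with `b` right-continuous at `0`.
A monotone `h` is made continuous by averaging over dilations, `r ↦ ∫ s in c..d, h (r s)`,
which lies between `(d - c) h(r c)` and `(d - c) h(r d)`; a factor `r / (1 + r)` below, resp.
a summand `r` above, then makes the bounds strictly increasing.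
-/

open Filter Set Metric Topology intervalIntegral

def IsKInfty (ψ : ℝ → ℝ) : Prop :=
  ContinuousOn ψ (Ici 0) ∧ StrictMonoOn ψ (Ici 0) ∧ ψ 0 = 0 ∧ Tendsto ψ atTop atTop

namespace Monotone

variable {h : ℝ → ℝ} {c d r : ℝ}

theorem intervalIntegrable_comp_mul (hh : Monotone h) (hr : 0 ≤ r) (c d : ℝ) :
    IntervalIntegrable (fun s => h (r * s)) MeasureTheory.volume c d :=
  (hh.comp (monotone_mul_left_of_nonneg hr)).intervalIntegrable

theorem integral_comp_mul_le (hh : Monotone h) (hcd : c ≤ d) (hr : 0 ≤ r) :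
    ∫ s in c..d, h (r * s) ≤ (d - c) * h (r * d) := by
  calc ∫ s in c..d, h (r * s) ≤ ∫ _ in c..d, h (r * d) :=
        integral_mono_on hcd (hh.intervalIntegrable_comp_mul hr c d) intervalIntegrable_const
          fun s hs => hh (mul_le_mul_of_nonneg_left hs.2 hr)
    _ = (d - c) * h (r * d) := by rw [integral_const, smul_eq_mul]

theorem le_integral_comp_mul (hh : Monotone h) (hcd : c ≤ d) (hr : 0 ≤ r) :
    (d - c) * h (r * c) ≤ ∫ s in c..d, h (r * s) := by
  calc (d - c) * h (r * c) = ∫ _ in c..d, h (r * c) := by rw [integral_const, smul_eq_mul]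
    _ ≤ ∫ s in c..d, h (r * s) :=
        integral_mono_on hcd intervalIntegrable_const (hh.intervalIntegrable_comp_mul hr c d)
          fun s hs => hh (mul_le_mul_of_nonneg_left hs.1 hr)

theorem monotoneOn_integral_comp_mul (hh : Monotone h) (hc : 0 ≤ c) (hcd : c ≤ d) :
    MonotoneOn (fun r => ∫ s in c..d, h (r * s)) (Ici 0) := fun _ hr₁ _ _ h12 =>
  integral_mono_on hcd (hh.intervalIntegrable_comp_mul hr₁ c d)
    (hh.intervalIntegrable_comp_mul (le_trans hr₁ h12) c d)
    fun _ hs => hh (mul_le_mul_of_nonneg_right h12 (hc.trans hs.1))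

theorem continuousAt_integral_comp_mul (hh : Monotone h) (hr : r ≠ 0) :
    ContinuousAt (fun t => ∫ s in c..d, h (t * s)) r := by
  set F : ℝ → ℝ := fun t => ∫ u in 0..t, h u
  have hF : Continuous F := continuous_primitive (fun _ _ => hh.intervalIntegrable) 0
  -- substituting `u = t * s` expresses the average through the primitive `F`
  have hsubst : ∀ t ≠ 0, ∫ s in c..d, h (t * s) = t⁻¹ * (F (t * d) - F (t * c)) := by
    intro t ht
    rw [integral_comp_mul_left h ht, smul_eq_mul,
      integral_interval_sub_left hh.intervalIntegrable hh.intervalIntegrable]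
  have hcont : ContinuousAt (fun t => t⁻¹ * (F (t * d) - F (t * c))) r :=
    (continuousAt_inv₀ hr).mul (by fun_prop)
  exact hcont.congr (eventually_ne_nhds hr |>.mono fun t ht => (hsubst t ht).symm)

theorem continuousOn_integral_comp_mul (hh : Monotone h) (hc : 0 ≤ c) (hcd : c ≤ d)
    (h0 : ContinuousWithinAt h (Ici 0) 0) :
    ContinuousOn (fun r => ∫ s in c..d, h (r * s)) (Ici 0) := by
  intro r hr
  rcases (mem_Ici.1 hr).eq_or_lt with rfl | hr
  · have hmul (e : ℝ) (he : 0 ≤ e) :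
        Tendsto (fun t => (d - c) * h (t * e)) (𝓝[Ici 0] 0) (𝓝 ((d - c) * h 0)) := by
      have := h0.comp_of_eq (f := fun t => t * e) (s := Ici 0)
        (continuous_mul_const e).continuousWithinAt
        (fun t ht => mem_Ici.2 (mul_nonneg (mem_Ici.1 ht) he)) (zero_mul e)
      simpa only [Function.comp_def, zero_mul] using this.tendsto.const_mul (d - c)
    have hval : ∫ s in c..d, h (0 * s) = (d - c) * h 0 := by
      simp only [zero_mul, integral_const, smul_eq_mul]
    rw [ContinuousWithinAt, hval]
    refine tendsto_of_tendsto_of_tendsto_of_le_of_le' (hmul c hc) (hmul d (hc.trans hcd))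
      ?_ ?_ <;> filter_upwards [self_mem_nhdsWithin] with t ht
    · exact hh.le_integral_comp_mul hcd ht
    · exact hh.integral_comp_mul_le hcd ht
  · exact (hh.continuousAt_integral_comp_mul hr.ne').continuousWithinAt

end Monotone

theorem isKInfty_mul_div_one_add {g : ℝ → ℝ} (hcont : ContinuousOn g (Ici 0))
    (hmono : MonotoneOn g (Ici 0)) (hpos : ∀ r, 0 < r → 0 < g r)
    (htop : Tendsto g atTop atTop) : IsKInfty fun r => r / (1 + r) * g r := by
  have hfrac : StrictMonoOn (fun r : ℝ => r / (1 + r)) (Ici 0) := by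
    intro r₁ hr₁ r₂ hr₂ h12
    have h₁ : (0 : ℝ) ≤ r₁ := hr₁
    rw [div_lt_div_iff₀ (by linarith) (by linarith)]
    linarith
  refine ⟨?_, ?_, by simp, ?_⟩
  · refine ContinuousOn.mul (fun r hr => ?_) hcont
    have : (1 : ℝ) + r ≠ 0 := by linarith [mem_Ici.1 hr]
    exact (continuousAt_id.div (continuousAt_const.add continuousAt_id) this).continuousWithinAt
  · intro r₁ hr₁ r₂ hr₂ h12
    have h₁ : (0 : ℝ) ≤ r₁ := hr₁
    calc r₁ / (1 + r₁) * g r₁ ≤ r₁ / (1 + r₁) * g r₂ :=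
          mul_le_mul_of_nonneg_left (hmono hr₁ hr₂ h12.le) (by positivity)
      _ < r₂ / (1 + r₂) * g r₂ :=
          mul_lt_mul_of_pos_right (hfrac hr₁ hr₂ h12) (hpos r₂ (h₁.trans_lt h12))
  · refine tendsto_atTop_mono' _ ?_ (htop.const_mul_atTop (one_half_pos (α := ℝ)))
    filter_upwards [eventually_ge_atTop 1] with r hr
    have hg : 0 ≤ g r := (hpos r (by linarith)).le
    have : (1 : ℝ) / 2 ≤ r / (1 + r) := by
      rw [div_le_div_iff₀ two_pos (by linarith)]; linarith
    exact mul_le_mul_of_nonneg_right this hg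

theorem exists_isKInfty_le {α : ℝ → ℝ} (hα : Monotone α) (h0 : 0 ≤ α 0)
    (hpos : ∀ r, 0 < r → 0 < α r) (htop : Tendsto α atTop atTop) :
    ∃ ψ, IsKInfty ψ ∧ ∀ r, 0 ≤ r → ψ r ≤ α r := by
  -- truncating by the identity makes the average below tend to `0` at `0`
  set a : ℝ → ℝ := fun r => min (α r) r
  have ha : Monotone a := hα.min monotone_id
  have ha_nonneg : ∀ r, 0 ≤ r → 0 ≤ a r := fun r hr => le_min (h0.trans (hα hr)) hr
  have ha_cont : ContinuousWithinAt a (Ici 0) 0 := by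
    have ha0 : a 0 = 0 := le_antisymm (min_le_right _ _) (ha_nonneg 0 le_rfl)
    rw [ContinuousWithinAt, ha0]
    refine tendsto_of_tendsto_of_tendsto_of_le_of_le' tendsto_const_nhds
      (tendsto_nhdsWithin_of_tendsto_nhds tendsto_id) ?_ ?_ <;>
      filter_upwards [self_mem_nhdsWithin] with r hr
    exacts [ha_nonneg r hr, min_le_right _ _]
  have ha_top : Tendsto a atTop atTop := tendsto_atTop.2 fun M =>
    ((tendsto_atTop.1 htop M).and (eventually_ge_atTop M)).mono fun _ hr => le_min hr.1 hr.2
  set g : ℝ → ℝ := fun r => ∫ s in (1 / 2 : ℝ)..1, a (r * s)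
  have hg_le : ∀ r, 0 ≤ r → g r ≤ a r / 2 := fun r hr =>
    (ha.integral_comp_mul_le (c := 1 / 2) (d := 1) (by norm_num) hr).trans_eq
      (by rw [mul_one]; ring)
  have hg_ge : ∀ r, 0 ≤ r → a (r / 2) / 2 ≤ g r := fun r hr =>
    (ha.le_integral_comp_mul (c := 1 / 2) (d := 1) (by norm_num) hr).trans_eq'
      (by rw [mul_one_div]; ring)
  refine ⟨fun r => r / (1 + r) * g r, isKInfty_mul_div_one_add
    (ha.continuousOn_integral_comp_mul (by norm_num) (by norm_num) ha_cont)
    (ha.monotoneOn_integral_comp_mul (by norm_num) (by norm_num)) (fun r hr => ?_) ?_,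
    fun r hr => ?_⟩
  · have : 0 < a (r / 2) := lt_min (hpos _ (by positivity)) (by positivity)
    linarith [hg_ge r hr.le]
  · refine tendsto_atTop_mono' _ ?_ ((ha_top.comp
      (tendsto_id.atTop_div_const two_pos)).atTop_div_const two_pos)
    filter_upwards [eventually_ge_atTop 0] with r hr using hg_ge r hr
  · have hg : 0 ≤ g r := by linarith [hg_ge r hr, ha_nonneg (r / 2) (by positivity)]
    have hfrac : r / (1 + r) ≤ 1 := by rw [div_le_one (by linarith)]; linarith
    calc r / (1 + r) * g r ≤ g r := mul_le_of_le_one_left hg hfrac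
      _ ≤ a r / 2 := hg_le r hr
      _ ≤ α r := by linarith [ha_nonneg r hr, min_le_left (α r) r]

theorem exists_isKInfty_ge {β : ℝ → ℝ} (hβ : Monotone β) (h0 : β 0 = 0)
    (hcont : ContinuousWithinAt β (Ici 0) 0) :
    ∃ ψ, IsKInfty ψ ∧ ∀ r, 0 ≤ r → β r ≤ ψ r := by
  set g : ℝ → ℝ := fun r => ∫ s in (1 : ℝ)..2, β (r * s)
  have hg_ge : ∀ r, 0 ≤ r → β r ≤ g r := fun r hr => by
    have := hβ.le_integral_comp_mul (c := 1) (d := 2) (by norm_num) hr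
    rwa [mul_one, show (2 : ℝ) - 1 = 1 by norm_num, one_mul] at this
  have hg_nonneg : ∀ r, 0 ≤ r → 0 ≤ g r := fun r hr => (h0 ▸ hβ hr).trans (hg_ge r hr)
  refine ⟨fun r => r + g r, ⟨?_, ?_, ?_, ?_⟩,
    fun r hr => (hg_ge r hr).trans (le_add_of_nonneg_left hr)⟩
  · exact continuousOn_id.add
      (hβ.continuousOn_integral_comp_mul (by norm_num) (by norm_num) hcont)
  · exact strictMonoOn_id.add_monotone
      (hβ.monotoneOn_integral_comp_mul (by norm_num) (by norm_num))
  · simp [g, h0]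
  · refine tendsto_atTop_mono' _ ?_ tendsto_id
    filter_upwards [eventually_ge_atTop 0] with r hr
    exact le_add_of_nonneg_right (hg_nonneg r hr)

theorem exists_pos_forall_le_of_tendsto_cobounded {E : Type*} [PseudoMetricSpace E]
    [ProperSpace E] {V : E → ℝ} (hV : Continuous V)
    (hrad : Tendsto V (Bornology.cobounded E) atTop) {C : Set E} (hC : IsClosed C)
    (hpos : ∀ x ∈ C, 0 < V x) : ∃ ε, 0 < ε ∧ ∀ x ∈ C, ε ≤ V x := by
  have hbdd : Bornology.IsBounded {x | V x ≤ 1} := by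
    rw [Bornology.isBounded_def]
    filter_upwards [hrad.eventually_gt_atTop 1] with x hx using not_le.2 hx
  have hK : IsCompact (C ∩ {x | V x ≤ 1}) :=
    isCompact_of_isClosed_isBounded (hC.inter (isClosed_le hV continuous_const))
      (hbdd.subset inter_subset_right)
  obtain ⟨ε, hε, hεle⟩ := hK.exists_forall_le' hV.continuousOn fun x hx => hpos x hx.1
  refine ⟨min ε 1, lt_min hε one_pos, fun x hx => ?_⟩
  by_cases h1 : V x ≤ 1
  · exact (min_le_left _ _).trans (hεle x ⟨hx, h1⟩)
  · exact (min_le_right _ _).trans (not_le.1 h1).le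

section Envelopes

variable {E : Type*} [MetricSpace E] (V : E → ℝ) (S : Set E)

/-- The extra value `r` keeps the infimum meaningful when no point lies at distance `≥ r` from
`S` (where `sInf ∅ = 0`), and makes the envelope at most the identity. -/
noncomputable def lowerEnvelope (r : ℝ) : ℝ :=
  sInf (insert r (V '' {x | r ≤ infDist x S}))

noncomputable def upperEnvelope (r : ℝ) : ℝ :=
  sSup (V '' cthickening r S)

variable {V S}

theorem bddBelow_lowerEnvelope (hV : ∀ x, 0 ≤ V x) (r : ℝ) :
    BddBelow (insert r (V '' {x | r ≤ infDist x S})) :=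
  BddBelow.insert r ⟨0, by rintro _ ⟨y, -, rfl⟩; exact hV y⟩

theorem lowerEnvelope_le (hV : ∀ x, 0 ≤ V x) {r : ℝ} {x : E} (hx : r ≤ infDist x S) :
    lowerEnvelope V S r ≤ V x :=
  csInf_le (bddBelow_lowerEnvelope hV r) (mem_insert_of_mem _ ⟨x, hx, rfl⟩)

theorem lowerEnvelope_le_self (hV : ∀ x, 0 ≤ V x) (r : ℝ) : lowerEnvelope V S r ≤ r :=
  csInf_le (bddBelow_lowerEnvelope hV r) (mem_insert _ _)

theorem monotone_lowerEnvelope (hV : ∀ x, 0 ≤ V x) : Monotone (lowerEnvelope V S) := by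
  intro r₁ r₂ h12
  refine le_csInf (insert_nonempty _ _) ?_
  rintro _ (rfl | ⟨x, hx, rfl⟩)
  · exact (lowerEnvelope_le_self hV r₁).trans h12
  · exact lowerEnvelope_le hV (h12.trans hx)

theorem lowerEnvelope_nonneg (hV : ∀ x, 0 ≤ V x) {r : ℝ} (hr : 0 ≤ r) :
    0 ≤ lowerEnvelope V S r := by
  refine le_csInf (insert_nonempty _ _) ?_
  rintro _ (rfl | ⟨x, -, rfl⟩)
  exacts [hr, hV x]

theorem lowerEnvelope_pos [ProperSpace E] (hV : ∀ x, 0 ≤ V x) (hVcont : Continuous V)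
    (hrad : Tendsto V (Bornology.cobounded E) atTop) (hzero : ∀ x, V x = 0 → x ∈ S) {r : ℝ}
    (hr : 0 < r) : 0 < lowerEnvelope V S r := by
  have hpos : ∀ x ∈ {x | r ≤ infDist x S}, 0 < V x := fun x hx =>
    (hV x).lt_of_ne' fun h => hr.not_ge (infDist_zero_of_mem (hzero x h) ▸ hx)
  obtain ⟨ε, hε, hεle⟩ := exists_pos_forall_le_of_tendsto_cobounded hVcont hrad
    (isClosed_le continuous_const (continuous_infDist_pt S)) hpos
  refine (lt_min hε hr).trans_le (le_csInf (insert_nonempty _ _) ?_)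
  rintro _ (rfl | ⟨x, hx, rfl⟩)
  exacts [min_le_right _ _, (min_le_left _ _).trans (hεle x hx)]

theorem tendsto_lowerEnvelope_atTop (hS : S.Nonempty)
    (hrad : Tendsto V (Bornology.cobounded E) atTop) :
    Tendsto (lowerEnvelope V S) atTop atTop := by
  obtain ⟨s₀, hs₀⟩ := hS
  refine tendsto_atTop.2 fun M => ?_
  have hfar := hrad.eventually_ge_atTop M
  rw [← comap_dist_right_atTop s₀, (atTop_basis.comap _).eventually_iff] at hfar
  obtain ⟨R, -, hR⟩ := hfar
  filter_upwards [eventually_ge_atTop (max M R)] with r hr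
  refine le_csInf (insert_nonempty _ _) ?_
  rintro _ (rfl | ⟨x, hx, rfl⟩)
  · exact (le_max_left _ _).trans hr
  · exact hR ((le_max_right _ _).trans (hr.trans (hx.trans (infDist_le_dist_of_mem hs₀))))

theorem le_upperEnvelope [ProperSpace E] (hVcont : Continuous V) (hS : IsCompact S) {r : ℝ}
    {x : E} (hx : x ∈ cthickening r S) : V x ≤ upperEnvelope V S r :=
  le_csSup (hS.cthickening.bddAbove_image hVcont.continuousOn) ⟨x, hx, rfl⟩

theorem le_upperEnvelope_infDist [ProperSpace E] (hVcont : Continuous V) (hS : IsCompact S)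
    (hne : S.Nonempty) (x : E) : V x ≤ upperEnvelope V S (infDist x S) := by
  obtain ⟨y, hy, hxy⟩ := hS.exists_infDist_eq_dist hne x
  exact le_upperEnvelope hVcont hS (mem_cthickening_of_dist_le x y _ S hy hxy.ge)

theorem monotone_upperEnvelope [ProperSpace E] (hVcont : Continuous V) (hS : IsCompact S)
    (hne : S.Nonempty) : Monotone (upperEnvelope V S) := fun _ _ h12 =>
  csSup_le_csSup (hS.cthickening.bddAbove_image hVcont.continuousOn)
    ((hne.mono (self_subset_cthickening S)).image V) (image_mono (cthickening_mono h12 S))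

theorem upperEnvelope_zero (hS : IsClosed S) (hne : S.Nonempty) (hzero : ∀ x ∈ S, V x = 0) :
    upperEnvelope V S 0 = 0 := by
  have : V '' S = {0} := by
    refine subset_antisymm ?_ (singleton_subset_iff.2 ?_)
    · rintro _ ⟨x, hx, rfl⟩
      exact hzero x hx
    · obtain ⟨x, hx⟩ := hne
      exact ⟨x, hx, hzero x hx⟩
  rw [upperEnvelope, cthickening_zero, hS.closure_eq, this, csSup_singleton]

theorem continuousWithinAt_upperEnvelope_zero [ProperSpace E] (hVcont : Continuous V)
    (hS : IsCompact S) (hne : S.Nonempty) (hzero : ∀ x ∈ S, V x = 0) :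
    ContinuousWithinAt (upperEnvelope V S) (Ici 0) 0 := by
  have hmono := monotone_upperEnvelope hVcont hS hne
  rw [ContinuousWithinAt, upperEnvelope_zero hS.isClosed hne hzero]
  refine tendsto_order.2 ⟨fun a ha => ?_, fun ε hε => ?_⟩
  · filter_upwards [self_mem_nhdsWithin] with r hr
    exact ha.trans_le (upperEnvelope_zero hS.isClosed hne hzero ▸ hmono hr)
  · obtain ⟨δ, hδ, hsub⟩ :=
      hS.exists_cthickening_subset_open (isOpen_lt hVcont continuous_const)
        fun x hx => (hzero x hx).trans_lt (half_pos hε)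
    have hδε : upperEnvelope V S δ < ε :=
      (csSup_le ((hne.mono (self_subset_cthickening S)).image V)
        (by rintro _ ⟨x, hx, rfl⟩; exact (hsub hx).le)).trans_lt (half_lt_self hε)
    filter_upwards [nhdsWithin_le_nhds (Iio_mem_nhds hδ)] with r hr
    exact (hmono (le_of_lt hr)).trans_lt hδε

end Envelopes

/-- Claim from the proof of **Proposition 4**: a continuous, nonnegative, radially unbounded
function `V` vanishing exactly on a nonempty compact set `S` is sandwiched between two
class-`K∞` functions of the distance to `S`. -/
theorem exists_Kinfty_sandwich
    {n : ℕ} (S : Set (EuclideanSpace ℝ (Fin n)))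
    (hSne : S.Nonempty) (hScomp : IsCompact S)
    (V : EuclideanSpace ℝ (Fin n) → ℝ)
    (hVcont : Continuous V)
    (hVnonneg : ∀ x, 0 ≤ V x)
    (hVrad : Tendsto V (Bornology.cobounded (EuclideanSpace ℝ (Fin n))) atTop)
    (hVzero : ∀ x, V x = 0 ↔ x ∈ S) :
    ∃ ψ₁ ψ₂ : ℝ → ℝ,
      (ContinuousOn ψ₁ (Ici 0) ∧ StrictMonoOn ψ₁ (Ici 0) ∧ ψ₁ 0 = 0 ∧
        Tendsto ψ₁ atTop atTop) ∧
      (ContinuousOn ψ₂ (Ici 0) ∧ StrictMonoOn ψ₂ (Ici 0) ∧ ψ₂ 0 = 0 ∧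
        Tendsto ψ₂ atTop atTop) ∧
      ∀ x, ψ₁ (Metric.infDist x S) ≤ V x ∧ V x ≤ ψ₂ (Metric.infDist x S) := by
  obtain ⟨ψ₁, hψ₁, hψ₁_le⟩ := exists_isKInfty_le
    (monotone_lowerEnvelope (S := S) hVnonneg) (lowerEnvelope_nonneg hVnonneg le_rfl)
    (fun _ hr => lowerEnvelope_pos hVnonneg hVcont hVrad (fun x => (hVzero x).1) hr)
    (tendsto_lowerEnvelope_atTop hSne hVrad)
  obtain ⟨ψ₂, hψ₂, hψ₂_ge⟩ := exists_isKInfty_ge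
    (monotone_upperEnvelope hVcont hScomp hSne)
    (upperEnvelope_zero hScomp.isClosed hSne fun x => (hVzero x).2)
    (continuousWithinAt_upperEnvelope_zero hVcont hScomp hSne fun x => (hVzero x).2)
  refine ⟨ψ₁, ψ₂, hψ₁, hψ₂, fun x => ⟨?_, ?_⟩⟩
  · exact (hψ₁_le _ infDist_nonneg).trans (lowerEnvelope_le hVnonneg le_rfl)
  · exact (le_upperEnvelope_infDist hVcont hScomp hSne x).trans (hψ₂_ge _ infDist_nonneg)
end
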